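/- Fibers of the path-to-factorisation map in the Weingarten graph: for every integer k ≥ 1, every permutation σ ∈ S_k, and every monotone factorisation τ of σ, the number of directed paths ρ in the Weingarten graph G^S from σ to the empty permutation ( ) ∈ S_0 with F(ρ) = τ equals 2^{b(τ)}, where b(τ) is the hive number of τ. -/

import Mathlib

/-- The larger of the two points moved by a transposition (as a natural number);
more generally, the largest non-fixed point of a permutation of `Fin k`. -/
def swapTop {k : ℕ} (π : Equiv.Perm (Fin k)) : ℕ :=
  π.support.sup fun x => (x : ℕ)

/-- The extension of `ρ ∈ S_k` to a permutation of `{0, …, k}` fixing the top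
point `Fin.last k` (the inverse of the restriction `σ ↦ σ↓`). -/
def permUp {k : ℕ} (ρ : Equiv.Perm (Fin k)) : Equiv.Perm (Fin (k + 1)) :=
  finSuccEquivLast.permCongr.symm ρ.optionCongr

/-- Directed paths in the Weingarten graph `G^S` from a vertex `σ ∈ S_k` down to the
empty permutation `( ) ∈ S_0`.  A term of `GPath k σ` records, edge by edge, a path
starting at `σ`:
* `stepA i p`: a type-A edge `σ → σ ∘ (i k)` (so `σ = (σ ∘ (i k)) ∘ (i k)`),
  followed by the path `p` from `σ ∘ (i k)`;
* `stepB p`: a type-B edge `σ → σ↓` (for `σ` fixing the top point, i.e.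
  `σ = permUp ρ`), followed by the path `p` from `ρ = σ↓`;
* `stepC i p`: a type-C edge `σ → [σ ∘ (i k)]↓` (for `σ` sending `i` to the top
  point, i.e. `σ = permUp ρ ∘ (i k)`), followed by the path `p` from `ρ`. -/
inductive GPath : (k : ℕ) → Equiv.Perm (Fin k) → Type
  | nil : GPath 0 1
  | stepA {k : ℕ} {σ' : Equiv.Perm (Fin (k + 1))} (i : Fin k) (p : GPath (k + 1) σ') :
      GPath (k + 1) (σ' * Equiv.swap i.castSucc (Fin.last k))
  | stepB {k : ℕ} {ρ : Equiv.Perm (Fin k)} (p : GPath k ρ) :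
      GPath (k + 1) (permUp ρ)
  | stepC {k : ℕ} {ρ : Equiv.Perm (Fin k)} (i : Fin k) (p : GPath k ρ) :
      GPath (k + 1) (permUp ρ * Equiv.swap i.castSucc (Fin.last k))

/-- The map `F` from paths to monotone factorisations: record the transposition
`(i k)` of each type-A and type-C edge, and reverse the recorded sequence
(transpositions from lower levels are extended by `permUp`). -/
def pathFact : {k : ℕ} → {σ : Equiv.Perm (Fin k)} → GPath k σ → List (Equiv.Perm (Fin k))
  | _, _, .nil => []
  | _, _, .stepA i p => pathFact p ++ [Equiv.swap i.castSucc (Fin.last _)]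
  | _, _, .stepB p => (pathFact p).map permUp
  | _, _, .stepC i p => (pathFact p).map permUp ++ [Equiv.swap i.castSucc (Fin.last _)]


open Equiv

section PermLemmas

lemma permUp_castSucc {k} (ρ : Perm (Fin k)) (x : Fin k) :
    permUp ρ x.castSucc = (ρ x).castSucc := by
  simp [permUp, Equiv.permCongr_symm_apply]

lemma permUp_last {k} (ρ : Perm (Fin k)) : permUp ρ (Fin.last k) = Fin.last k := by
  simp [permUp, Equiv.permCongr_symm_apply]

lemma permUp_injective {k} : Function.Injective (permUp (k := k)) := by
  intro a b h
  ext x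
  have := congrArg (fun (e : Perm (Fin (k+1))) => e x.castSucc) h
  simp only [permUp_castSucc] at this
  exact congrArg Fin.val (Fin.castSucc_inj.mp this)

lemma permUp_mul {k} (a b : Perm (Fin k)) : permUp (a * b) = permUp a * permUp b := by
  ext x
  induction x using Fin.lastCases with
  | last => simp [permUp_last, Perm.mul_apply]
  | cast i => simp [Perm.mul_apply, permUp_castSucc]

lemma permUp_one {k} : permUp (1 : Perm (Fin k)) = 1 := by
  ext x
  induction x using Fin.lastCases with
  | last => simp [permUp_last]
  | cast i => simpa using congrArg Fin.val (permUp_castSucc 1 i)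

lemma permUp_prod {k} (l : List (Perm (Fin k))) :
    permUp l.prod = (l.map permUp).prod := by
  induction l with
  | nil => exact permUp_one
  | cons x t ih => rw [List.prod_cons, permUp_mul, ih, List.map_cons, List.prod_cons]

lemma permUp_swap {k} (a b : Fin k) :
    permUp (Equiv.swap a b) = Equiv.swap a.castSucc b.castSucc := by
  ext x
  induction x using Fin.lastCases with
  | last =>
    rw [permUp_last, Equiv.swap_apply_of_ne_of_ne (Fin.castSucc_lt_last _).ne'
      (Fin.castSucc_lt_last _).ne']
  | cast i =>
    rw [permUp_castSucc]
    rcases eq_or_ne i a with rfl | ha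
    · simp
    rcases eq_or_ne i b with rfl | hb
    · simp
    rw [Equiv.swap_apply_of_ne_of_ne ha hb,
      Equiv.swap_apply_of_ne_of_ne (by simpa [Fin.castSucc_inj] using ha)
        (by simpa [Fin.castSucc_inj] using hb)]

lemma swapTop_swap {k} {a b : Fin k} (h : a ≠ b) :
    swapTop (Equiv.swap a b) = max (a : ℕ) b := by
  rw [swapTop, Equiv.Perm.support_swap h, Finset.sup_insert, Finset.sup_singleton]

lemma swapTop_le {k} (π : Perm (Fin (k+1))) : swapTop π ≤ k :=
  Finset.sup_le fun x _ => Fin.is_le x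

lemma le_swapTop_of_moves_last {k} {π : Perm (Fin (k+1))}
    (h : π (Fin.last k) ≠ Fin.last k) : k ≤ swapTop π := by
  have := Finset.le_sup (f := fun x : Fin (k+1) => (x : ℕ)) (Equiv.Perm.mem_support.mpr h)
  exact this

lemma swapTop_lt_of_fixes_last {k} {π : Perm (Fin (k+1))} (hs : π.IsSwap)
    (h : π (Fin.last k) = Fin.last k) : swapTop π < k := by
  obtain ⟨a, b, hab, rfl⟩ := hs
  have ha : a ≠ Fin.last k := by
    rintro rfl; rw [Equiv.swap_apply_left] at h; exact hab h.symm
  have hb : b ≠ Fin.last k := by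
    rintro rfl; rw [Equiv.swap_apply_right] at h; exact hab h
  rw [swapTop_swap hab]
  have := Fin.val_lt_last ha
  have := Fin.val_lt_last hb
  omega

lemma swapTop_swapLast {k} (i : Fin k) :
    swapTop (Equiv.swap i.castSucc (Fin.last k)) = k := by
  rw [swapTop_swap (Fin.castSucc_lt_last i).ne]
  simp [Nat.max_eq_right (le_of_lt i.isLt)]

lemma swapLast_moves_last {k} (i : Fin k) :
    Equiv.swap i.castSucc (Fin.last k) (Fin.last k) ≠ Fin.last k := by
  rw [Equiv.swap_apply_right]
  exact (Fin.castSucc_lt_last i).ne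

lemma fixes_last_exists {k} {π : Perm (Fin (k+1))} (h : π (Fin.last k) = Fin.last k) :
    ∃ ρ, permUp ρ = π := by
  have hmem : ∀ x : Fin k, π x.castSucc ≠ Fin.last k := by
    intro x hx
    exact (Fin.castSucc_lt_last x).ne (π.injective (hx.trans h.symm))
  have h' : π⁻¹ (Fin.last k) = Fin.last k := by
    rw [Perm.inv_eq_iff_eq]; exact h.symm
  have hmem' : ∀ x : Fin k, π⁻¹ x.castSucc ≠ Fin.last k := by
    intro x hx
    exact (Fin.castSucc_lt_last x).ne (π⁻¹.injective (hx.trans h'.symm))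
  refine ⟨⟨fun x => (π x.castSucc).castPred (hmem x),
          fun x => (π⁻¹ x.castSucc).castPred (hmem' x), ?_, ?_⟩, ?_⟩
  · intro x; simp
  · intro x; simp
  · ext x
    induction x using Fin.lastCases with
    | last => rw [permUp_last, h]
    | cast i => rw [permUp_castSucc]; simp [Equiv.coe_fn_mk]

lemma exists_map_permUp {k} : ∀ (l : List (Perm (Fin (k+1)))),
    (∀ x ∈ l, x (Fin.last k) = Fin.last k) → ∃ l' : List (Perm (Fin k)), l = l'.map permUp := by
  intro l
  induction l with
  | nil => exact fun _ => ⟨[], rfl⟩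
  | cons x t ih =>
    intro h
    obtain ⟨ρ, hρ⟩ := fixes_last_exists (h x (List.mem_cons_self))
    obtain ⟨t', rfl⟩ := ih fun y hy => h y (List.mem_cons_of_mem _ hy)
    exact ⟨ρ :: t', by simp [hρ]⟩

lemma isSwap_of_permUp_isSwap {k} {x : Perm (Fin k)} (h : (permUp x).IsSwap) : x.IsSwap := by
  obtain ⟨a, b, hab, he⟩ := h
  have ha : a ≠ Fin.last k := by
    rintro rfl
    have := permUp_last x
    rw [he, Equiv.swap_apply_left] at this
    exact hab this.symm
  have hb : b ≠ Fin.last k := by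
    rintro rfl
    have := permUp_last x
    rw [he, Equiv.swap_apply_right] at this
    exact hab this
  obtain ⟨a', rfl⟩ := Fin.exists_castSucc_eq.mpr ha
  obtain ⟨b', rfl⟩ := Fin.exists_castSucc_eq.mpr hb
  refine ⟨a', b', by simpa [Fin.castSucc_inj] using hab, ?_⟩
  apply permUp_injective
  rw [he, permUp_swap]

lemma swapTop_permUp_of_isSwap {k} {x : Perm (Fin k)} (h : x.IsSwap) :
    swapTop (permUp x) = swapTop x := by
  obtain ⟨a, b, hab, rfl⟩ := h
  rw [permUp_swap, swapTop_swap (by simpa [Fin.castSucc_inj] using hab), swapTop_swap hab]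
  simp

lemma concat_inj {α} {l₁ l₂ : List α} {a b : α} (h : l₁ ++ [a] = l₂ ++ [b]) :
    l₁ = l₂ ∧ a = b := by
  have h' := congrArg List.reverse h
  simp only [List.reverse_append, List.reverse_singleton, List.singleton_append,
    List.cons_append, List.nil_append] at h'
  injection h' with hab hl
  exact ⟨List.reverse_injective hl, hab⟩

end PermLemmas

lemma isSwap_moves_last {k} {s : Equiv.Perm (Fin (k+1))} (hs : s.IsSwap)
    (h : s (Fin.last k) ≠ Fin.last k) :
    ∃ i : Fin k, s = Equiv.swap i.castSucc (Fin.last k) := by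
  obtain ⟨a, b, hab, rfl⟩ := hs
  rcases eq_or_ne a (Fin.last k) with rfl | ha
  · obtain ⟨i, rfl⟩ := Fin.exists_castSucc_eq.mpr hab.symm
    exact ⟨i, Equiv.swap_comm _ _⟩
  rcases eq_or_ne b (Fin.last k) with rfl | hb
  · obtain ⟨i, rfl⟩ := Fin.exists_castSucc_eq.mpr ha
    exact ⟨i, rfl⟩
  · exact absurd (Equiv.swap_apply_of_ne_of_ne (Ne.symm ha) (Ne.symm hb)) h

section GPathLemmas

def recast {k : ℕ} {σ σ' : Equiv.Perm (Fin k)} (h : σ = σ') (p : GPath k σ) : GPath k σ' :=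
  h ▸ p

@[simp] lemma recast_rfl {k σ} (h : σ = σ) (p : GPath k σ) : recast h p = p := rfl

lemma recast_recast {k} {σ₁ σ₂ σ₃ : Perm (Fin k)} (h : σ₁ = σ₂) (h' : σ₂ = σ₃)
    (p : GPath k σ₁) : recast h' (recast h p) = recast (h.trans h') p := by subst h'; rfl

lemma pathFact_recast {k} {σ σ' : Perm (Fin k)} (h : σ = σ') (p : GPath k σ) :
    pathFact (recast h p) = pathFact p := by subst h; rfl

lemma recast_stepA {k} {σ₁ σ₂ : Perm (Fin (k+1))} (h : σ₁ = σ₂) (i : Fin k)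
    (p : GPath (k+1) σ₁) :
    GPath.stepA i (recast h p) = recast (by rw [h]) (GPath.stepA i p) := by subst h; rfl

def ctorIdx : {k : ℕ} → {σ : Equiv.Perm (Fin k)} → GPath k σ → ℕ
  | _, _, .nil => 0
  | _, _, .stepA _ _ => 1
  | _, _, .stepB _ => 2
  | _, _, .stepC _ _ => 3

lemma ctorIdx_recast {k} {σ σ' : Perm (Fin k)} (h : σ = σ') (p : GPath k σ) :
    ctorIdx (recast h p) = ctorIdx p := by subst h; rfl

lemma recast_injective {k} {σ σ' : Perm (Fin k)} (h : σ = σ') :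
    Function.Injective (recast h) := by
  intro p q e
  have := congrArg (recast h.symm) e
  rwa [recast_recast, recast_recast, recast_rfl, recast_rfl] at this

lemma GPath.inversion {k} {σ : Perm (Fin (k+1))} (p : GPath (k+1) σ) :
    (∃ (i : Fin k) (p' : GPath (k+1) (σ * Equiv.swap i.castSucc (Fin.last k))),
        p = recast (by rw [mul_assoc]; simp) (GPath.stepA i p'))
  ∨ (∃ (ρ : Perm (Fin k)) (h : permUp ρ = σ) (q : GPath k ρ), p = recast h (GPath.stepB q))
  ∨ (∃ (i : Fin k) (ρ : Perm (Fin k))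
        (h : permUp ρ * Equiv.swap i.castSucc (Fin.last k) = σ)
        (q : GPath k ρ), p = recast h (GPath.stepC i q)) := by
  cases p with
  | stepA i p' =>
    left
    refine ⟨i, recast (by rw [mul_assoc]; simp) p', ?_⟩
    rw [recast_stepA, recast_recast]; exact (recast_rfl _ _).symm
  | stepB q => right; left; exact ⟨_, rfl, q, rfl⟩
  | stepC i q => right; right; exact ⟨i, _, rfl, q, rfl⟩

/-- fiber of `pathFact` -/
abbrev Fib {k : ℕ} (σ : Equiv.Perm (Fin k)) (τ : List (Equiv.Perm (Fin k))) : Type :=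
  {p : GPath k σ // pathFact p = τ}

/-- descent equivalence along a type-B edge -/
noncomputable def equivB {k} (ρ₀ : Perm (Fin k)) (τ' : List (Perm (Fin k))) :
    Fib (permUp ρ₀) (τ'.map permUp) ≃ Fib ρ₀ τ' := by
  refine (Equiv.ofBijective
    (fun q : Fib ρ₀ τ' => (⟨GPath.stepB q.1, by
      show (pathFact q.1).map permUp = _
      rw [q.2]⟩ : Fib (permUp ρ₀) (τ'.map permUp))) ⟨?_, ?_⟩).symm
  · rintro ⟨q, hq⟩ ⟨q', hq'⟩ e
    simp only [Subtype.mk.injEq] at e ⊢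
    injection e
  · rintro ⟨p, hp⟩
    rcases p.inversion with ⟨i, p', rfl⟩ | ⟨ρ, h, q, rfl⟩ | ⟨i, ρ, h, q, rfl⟩
    · exfalso
      rw [pathFact_recast] at hp
      have hm : Equiv.swap i.castSucc (Fin.last k) ∈ τ'.map permUp := by
        rw [← hp]
        exact List.mem_append_right _ (List.mem_singleton_self _)
      obtain ⟨x, -, hx⟩ := List.mem_map.mp hm
      exact swapLast_moves_last i (by rw [← hx, permUp_last])
    · obtain rfl : ρ = ρ₀ := permUp_injective h
      have hq : pathFact q = τ' :=
        (List.map_injective_iff.mpr permUp_injective) hp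
      exact ⟨⟨q, hq⟩, Subtype.ext rfl⟩
    · exfalso
      rw [pathFact_recast] at hp
      have hm : Equiv.swap i.castSucc (Fin.last k) ∈ τ'.map permUp := by
        rw [← hp]
        exact List.mem_append_right _ (List.mem_singleton_self _)
      obtain ⟨x, -, hx⟩ := List.mem_map.mp hm
      exact swapLast_moves_last i (by rw [← hx, permUp_last])

/-- the type of stepC-starting paths -/
abbrev FibC {k : ℕ} (σ : Equiv.Perm (Fin (k+1))) (i : Fin k)
    (τ₀ : List (Equiv.Perm (Fin (k+1)))) : Type :=
  {x : Σ ρ : Equiv.Perm (Fin k), GPath k ρ //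
    permUp x.1 * Equiv.swap i.castSucc (Fin.last k) = σ ∧ (pathFact x.2).map permUp = τ₀}

/-- splitting off the last transposition, at top level -/
noncomputable def equivA {k} (σ : Perm (Fin (k+1))) (i : Fin k)
    (τ₀ : List (Perm (Fin (k+1)))) :
    Fib σ (τ₀ ++ [Equiv.swap i.castSucc (Fin.last k)]) ≃
      (Fib (σ * Equiv.swap i.castSucc (Fin.last k)) τ₀ ⊕ FibC σ i τ₀) := by
  set s := Equiv.swap i.castSucc (Fin.last k) with hs
  have hss : ∀ σ' : Perm (Fin (k+1)), σ' * s * s = σ' := by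
    intro σ'; rw [mul_assoc, Equiv.swap_mul_self, mul_one]
  refine (Equiv.ofBijective (fun x => ?_) ⟨?_, ?_⟩).symm
  · rcases x with ⟨p, hp⟩ | ⟨⟨ρ, q⟩, h1, h2⟩
    · exact ⟨recast (hss σ) (GPath.stepA i p), by rw [pathFact_recast]; show _ ++ _ = _; rw [hp]⟩
    · exact ⟨recast h1 (GPath.stepC i q), by rw [pathFact_recast]; show _ ++ _ = _; rw [h2]⟩
  · rintro (⟨p, hp⟩ | ⟨⟨ρ, q⟩, h1, h2⟩) (⟨p', hp'⟩ | ⟨⟨ρ', q'⟩, h1', h2'⟩) e <;>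
      have ev := congrArg Subtype.val e
    · have hv := recast_injective _ ev
      injection hv with h1 h2 h3 h4
      subst h4
      rfl
    · exfalso
      have := congrArg ctorIdx ev
      rw [ctorIdx_recast, ctorIdx_recast] at this
      change 1 = 3 at this
      omega
    · exfalso
      have := congrArg ctorIdx ev
      rw [ctorIdx_recast, ctorIdx_recast] at this
      change 3 = 1 at this
      omega
    · obtain rfl : ρ = ρ' := permUp_injective (mul_right_cancel (h1.trans h1'.symm))
      have hv := recast_injective h1 ev
      injection hv with h1 h2 h3 h4
      subst h4
      rfl
  · rintro ⟨p, hp⟩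
    rcases p.inversion with ⟨i', p', rfl⟩ | ⟨ρ, h, q, rfl⟩ | ⟨i', ρ, h, q, rfl⟩
    · rw [pathFact_recast] at hp
      obtain ⟨h1, h2⟩ := concat_inj (hp : pathFact p' ++ _ = _)
      obtain rfl : i' = i := by
        have := congrArg (fun e : Perm (Fin (k+1)) => e (Fin.last k)) h2
        simpa [Equiv.swap_apply_right, hs, Fin.castSucc_inj] using this
      exact ⟨Sum.inl ⟨p', h1⟩, Subtype.ext rfl⟩
    · exfalso
      rw [pathFact_recast] at hp
      have hp' : (pathFact q).map permUp = τ₀ ++ [s] := hp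
      have hm : s ∈ (pathFact q).map permUp := by
        rw [hp']
        exact List.mem_append_right _ (List.mem_singleton_self _)
      obtain ⟨x, -, hx⟩ := List.mem_map.mp hm
      refine absurd ?_ (swapLast_moves_last i)
      rw [hs] at hx
      rw [← hx, permUp_last]
    · rw [pathFact_recast] at hp
      obtain ⟨h1, h2⟩ := concat_inj (hp : (pathFact q).map permUp ++ _ = _)
      obtain rfl : i' = i := by
        have := congrArg (fun e : Perm (Fin (k+1)) => e (Fin.last k)) h2
        simpa [Equiv.swap_apply_right, hs, Fin.castSucc_inj] using this
      exact ⟨Sum.inr ⟨⟨ρ, q⟩, h, h1⟩, Subtype.ext rfl⟩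

end GPathLemmas

lemma base_case_zero (σ : Perm (Fin 0)) (τ : List (Perm (Fin 0)))
    (hswap : ∀ x ∈ τ, x.IsSwap) :
    Nonempty (Fib σ τ ≃ Fin (2 ^ (τ.map swapTop).toFinset.card)) := by
  have hτ : τ = [] := by
    cases τ with
    | nil => rfl
    | cons x t =>
      obtain ⟨a, -, -, -⟩ := hswap x (List.mem_cons_self)
      exact a.elim0
  subst hτ
  have hσ : σ = 1 := by ext x; exact x.elim0
  subst hσ
  have hc : ((List.map swapTop ([] : List (Perm (Fin 0)))).toFinset.card) = 0 := by simp
  rw [hc]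
  refine ⟨⟨fun _ => ⟨0, by norm_num⟩, fun _ => ⟨GPath.nil, rfl⟩, ?_, ?_⟩⟩
  · rintro ⟨p, hp⟩
    cases p
    exact Subtype.ext rfl
  · intro x
    have := x.isLt
    norm_num at this
    exact Fin.ext (by omega)

lemma main_count : ∀ (n k : ℕ), ∀ (σ : Perm (Fin k)) (τ : List (Perm (Fin k))),
    τ.length + k ≤ n → (∀ x ∈ τ, x.IsSwap) →
    List.Pairwise (· ≤ ·) (τ.map swapTop) → τ.prod = σ →
    Nonempty (Fib σ τ ≃ Fin (2 ^ (τ.map swapTop).toFinset.card)) := by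
  intro n
  induction n with
  | zero =>
    intro k
    cases k with
    | zero => exact fun σ τ _ hswap _ _ => base_case_zero σ τ hswap
    | succ k => intro σ τ hn; omega
  | succ n ih =>
    intro k
    cases k with
    | zero => exact fun σ τ _ hswap _ _ => base_case_zero σ τ hswap
    | succ k =>
      intro σ τ hn hswap hmono hprod
      by_cases hfix : ∀ x ∈ τ, x (Fin.last k) = Fin.last k
      · -- all factors fix the top point: descend with a type-B edge
        obtain ⟨τ', rfl⟩ := exists_map_permUp τ hfix
        have hswap' : ∀ x ∈ τ', x.IsSwap := fun x hx =>
          isSwap_of_permUp_isSwap (hswap _ (List.mem_map_of_mem hx))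
        have hmaps : (τ'.map permUp).map swapTop = τ'.map swapTop := by
          rw [List.map_map]
          exact List.map_congr_left fun x hx => swapTop_permUp_of_isSwap (hswap' x hx)
        obtain ⟨E⟩ := ih k τ'.prod τ'
          (by simp only [List.length_map] at hn; omega) hswap'
          (by rw [← hmaps]; exact hmono) rfl
        subst hprod
        rw [hmaps, ← permUp_prod]
        exact ⟨(equivB τ'.prod τ').trans E⟩
      · -- some factor moves the top point
        push_neg at hfix
        rcases List.eq_nil_or_concat τ with rfl | ⟨τ₀, sl, rfl⟩
        · obtain ⟨y, hy, -⟩ := hfix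
          exact absurd hy (List.not_mem_nil)
        rw [List.concat_eq_append] at *
        have hsl : sl.IsSwap := hswap _ (List.mem_append_right _ (List.mem_singleton_self _))
        have hswap₀ : ∀ x ∈ τ₀, x.IsSwap := fun x hx =>
          hswap x (List.mem_append_left _ hx)
        rw [List.map_append] at hmono
        obtain ⟨hsorted₀, -, hrel⟩ := List.pairwise_append.mp hmono
        have hrel' : ∀ x ∈ τ₀, swapTop x ≤ swapTop sl := by
          intro x hx
          exact hrel _ (List.mem_map_of_mem hx) _ (List.mem_singleton_self _)
        -- the last factor must move the top point
        have hmv : sl (Fin.last k) ≠ Fin.last k := by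
          intro hfx
          obtain ⟨y, hy, hymv⟩ := hfix
          rcases List.mem_append.mp hy with hy₀ | hy₁
          · have h1 : k ≤ swapTop y := le_swapTop_of_moves_last hymv
            have h2 : swapTop sl < k := swapTop_lt_of_fixes_last hsl hfx
            exact absurd (hrel' y hy₀) (by omega)
          · rw [List.mem_singleton.mp hy₁] at hymv
            exact hymv hfx
        obtain ⟨i, rfl⟩ := isSwap_moves_last hsl hmv
        have hprod₀ : τ₀.prod = σ * Equiv.swap i.castSucc (Fin.last k) := by
          rw [List.prod_append, List.prod_singleton] at hprod
          rw [← hprod, mul_assoc, Equiv.swap_mul_self, mul_one]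
        rw [List.length_append] at hn
        by_cases hfix0 : ∀ x ∈ τ₀, x (Fin.last k) = Fin.last k
        · -- the last factor is the unique one moving the top point: two path choices
          obtain ⟨τ', rfl⟩ := exists_map_permUp τ₀ hfix0
          have hswap' : ∀ x ∈ τ', x.IsSwap := fun x hx =>
            isSwap_of_permUp_isSwap (hswap₀ _ (List.mem_map_of_mem hx))
          have hmaps : (τ'.map permUp).map swapTop = τ'.map swapTop := by
            rw [List.map_map]
            exact List.map_congr_left fun x hx => swapTop_permUp_of_isSwap (hswap' x hx)
          have hupρ : permUp τ'.prod = σ * Equiv.swap i.castSucc (Fin.last k) :=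
            (permUp_prod τ').trans hprod₀
          obtain ⟨E⟩ := ih k τ'.prod τ'
            (by simp only [List.length_map, List.length_singleton] at hn; omega) hswap'
            (by rw [← hmaps]; exact hsorted₀) rfl
          -- the FibC component
          have hCequiv : Nonempty (FibC σ i (τ'.map permUp) ≃ Fib τ'.prod τ') := by
            refine ⟨(Equiv.ofBijective (fun q : Fib τ'.prod τ' =>
              (⟨⟨τ'.prod, q.1⟩, by rw [hupρ, mul_assoc, Equiv.swap_mul_self, mul_one],
                by rw [q.2]⟩ : FibC σ i (τ'.map permUp))) ⟨?_, ?_⟩).symm⟩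
            · rintro ⟨q, hq⟩ ⟨q', hq'⟩ e
              have h := congrArg Subtype.val e
              dsimp only at h
              injection h with h1 h2
              exact Subtype.ext h2
            · rintro ⟨⟨ρ, q⟩, h1, h2⟩
              have h1' : permUp ρ * Equiv.swap i.castSucc (Fin.last k)
                  = permUp τ'.prod * Equiv.swap i.castSucc (Fin.last k) := by
                rw [h1, hupρ, mul_assoc, Equiv.swap_mul_self, mul_one]
              obtain rfl : ρ = τ'.prod := permUp_injective (mul_right_cancel h1')
              have hq : pathFact q = τ' :=
                (List.map_injective_iff.mpr permUp_injective) h2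
              exact ⟨⟨q, hq⟩, Subtype.ext rfl⟩
          obtain ⟨EC⟩ := hCequiv
          -- the FibA component
          have hAequiv : Fib (σ * Equiv.swap i.castSucc (Fin.last k)) (τ'.map permUp)
              ≃ Fib τ'.prod τ' := by
            rw [← hupρ]
            exact equivB τ'.prod τ'
          -- cardinality bookkeeping
          have hklt : ∀ x ∈ (τ'.map permUp), swapTop x < k := fun x hx =>
            swapTop_lt_of_fixes_last (hswap₀ x hx) (hfix0 x hx)
          have hcard : ((((τ'.map permUp) ++ [Equiv.swap i.castSucc (Fin.last k)]).map
              swapTop).toFinset.card) = ((τ'.map swapTop).toFinset.card) + 1 := by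
            rw [List.map_append, List.toFinset_append]
            simp only [List.map_cons, List.map_nil, swapTop_swapLast, List.toFinset_cons,
              List.toFinset_nil, insert_empty_eq]
            rw [Finset.union_comm, ← Finset.insert_eq, hmaps,
              Finset.card_insert_of_notMem]
            intro hk
            obtain ⟨x, hx, hxk⟩ := List.mem_map.mp (List.mem_toFinset.mp hk)
            have hlt := hklt (permUp x) (List.mem_map_of_mem hx)
            rw [swapTop_permUp_of_isSwap (hswap' x hx)] at hlt
            omega
          rw [hcard]
          refine ⟨((equivA σ i (τ'.map permUp)).trans
            (Equiv.sumCongr (hAequiv.trans E) (EC.trans E))).trans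
            (finSumFinEquiv.trans (finCongr (by rw [pow_succ, mul_two])))⟩
        · -- another factor also moves the top point: forced type-A step
          push_neg at hfix0
          obtain ⟨y, hy, hymv⟩ := hfix0
          have hCempty : IsEmpty (FibC σ i τ₀) := by
            refine ⟨fun c => ?_⟩
            obtain ⟨⟨ρ, q⟩, -, h2⟩ := c
            rw [← h2] at hy
            obtain ⟨x, -, hx⟩ := List.mem_map.mp hy
            rw [← hx, permUp_last] at hymv
            exact hymv rfl
          obtain ⟨E⟩ := ih (k+1) (σ * Equiv.swap i.castSucc (Fin.last k)) τ₀
            (by simp only [List.length_singleton] at hn; omega) hswap₀ hsorted₀ hprod₀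
          have hcard : (((τ₀ ++ [Equiv.swap i.castSucc (Fin.last k)]).map
              swapTop).toFinset.card) = ((τ₀.map swapTop).toFinset.card) := by
            rw [List.map_append, List.toFinset_append]
            simp only [List.map_cons, List.map_nil, swapTop_swapLast, List.toFinset_cons,
              List.toFinset_nil, insert_empty_eq]
            rw [Finset.union_comm, ← Finset.insert_eq, Finset.insert_eq_self.mpr]
            have hyk : swapTop y = k :=
              le_antisymm (swapTop_le y) (le_swapTop_of_moves_last hymv)
            exact List.mem_toFinset.mpr (List.mem_map.mpr ⟨y, hy, hyk⟩)
          rw [hcard]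
          exact ⟨((equivA σ i τ₀).trans (Equiv.sumEmpty _ _)).trans E⟩


/-- **Fibers of the path-to-factorisation map**: for every `σ ∈ S_k` and every
monotone factorisation `τ` of `σ`, the number of directed paths `ρ` in the
Weingarten graph from `σ` to `( ) ∈ S_0` with `F(ρ) = τ` is `2^{b(τ)}`, where
the hive number `b(τ)` is the number of distinct larger moved points of `τ`. -/
theorem weingarten_graph_fiber_count (k : ℕ) (hk : 1 ≤ k) (σ : Equiv.Perm (Fin k))
    (τ : List (Equiv.Perm (Fin k)))
    (hswap : ∀ x ∈ τ, x.IsSwap)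
    (hmono : List.Pairwise (· ≤ ·) (τ.map swapTop))
    (hprod : τ.prod = σ) :
    Nat.card {ρ : GPath k σ // pathFact ρ = τ} = 2 ^ (τ.map swapTop).toFinset.card := by
  obtain ⟨E⟩ := main_count (τ.length + k) k σ τ le_rfl hswap hmono hprod
  rw [Nat.card_congr E, Nat.card_eq_fintype_card, Fintype.card_fin]
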